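/- Let k be a field, q ∈ k nonzero, and let H = A(SL_q(2,k)) be the Hopf algebra generated as an algebra by a, b, c, d subject to ba=qab, ca=qac, db=qbd, dc=qcd, bc=cb, ad−q⁻¹bc=da−qbc=1, with Δ(a)=a⊗a+b⊗c, Δ(b)=a⊗b+b⊗d, Δ(c)=c⊗a+d⊗c, Δ(d)=c⊗b+d⊗d, ε(a)=ε(d)=1, ε(b)=ε(c)=0, S(a)=d, S(d)=a, S(b)=−qb, S(c)=−q⁻¹c. Then the assignment δ(a)=q, δ(b)=0, δ(c)=0, δ(d)=q⁻¹ extends to a well-defined character δ: H → k, and the twisted antipode Ŝ(h) = δ(h⁽²⁾)S(h⁽¹⁾) satisfies Ŝ² = id_H; i.e., (δ, 1) is a modular pair in involution for the dual theory. -/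

import Mathlib

/-!
Since `S` is an antihomomorphism and `δ` takes values in a commutative ring, the twisted antipode
`Ŝ = (S ⊗ δ) ∘ Δ` is again an antihomomorphism, so `Ŝ²` is an algebra endomorphism and it suffices
to check `Ŝ² = id` on the generators. There `Ŝ a = q d`, `Ŝ d = q⁻¹ a`, `Ŝ b = -b`, `Ŝ c = -c`.
-/

open TensorProduct Coalgebra HopfAlgebra

lemma AlgHom.unop_apply_unop_apply_eq_of_adjoin_eq_top {R A : Type*} [CommSemiring R]
    [Semiring A] [Algebra R A] (f : A →ₐ[R] Aᵐᵒᵖ) {s : Set A} (hs : Algebra.adjoin R s = ⊤)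
    (h : ∀ x ∈ s, (f (f x).unop).unop = x) (x : A) : (f (f x).unop).unop = x := by
  let g : A →ₐ[R] A := (AlgEquiv.opOp R A).symm.toAlgHom.comp ((AlgHom.op f).comp f)
  have : g = AlgHom.id R A := AlgHom.ext_of_adjoin_eq_top hs h
  exact DFunLike.congr_fun this x

namespace HopfAlgebra

variable {R H : Type*} [CommSemiring R] [Semiring H] [HopfAlgebra R H]

noncomputable def twistedAntipode (δ : H →ₐ[R] R) : H →ₗ[R] H :=
  (TensorProduct.rid R H).toLinearMap ∘ₗ TensorProduct.map (antipode R) δ.toLinearMap ∘ₗ comul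

noncomputable def twistedAntipodeAlgHomOp (δ : H →ₐ[R] R) : H →ₐ[R] Hᵐᵒᵖ :=
  (Algebra.TensorProduct.rid R R Hᵐᵒᵖ).toAlgHom.comp
    ((Algebra.TensorProduct.map (antipodeAlgHomOp R H) δ).comp (Bialgebra.comulAlgHom R H))

lemma unop_twistedAntipodeAlgHomOp (δ : H →ₐ[R] R) (h : H) :
    (twistedAntipodeAlgHomOp δ h).unop = twistedAntipode δ h := by
  simp only [twistedAntipodeAlgHomOp, twistedAntipode, AlgHom.comp_apply, LinearMap.comp_apply,
    Bialgebra.comulAlgHom_apply]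
  induction comul (R := R) h using TensorProduct.induction_on with
  | zero => simp
  | tmul x r => simp
  | add s t hs ht => simp_all

lemma twistedAntipode_involutive_of_adjoin_eq_top (δ : H →ₐ[R] R) {s : Set H}
    (hs : Algebra.adjoin R s = ⊤) (h : ∀ x ∈ s, twistedAntipode δ (twistedAntipode δ x) = x) :
    Function.Involutive (twistedAntipode δ) := by
  intro x
  simp only [← unop_twistedAntipodeAlgHomOp] at h ⊢
  exact (twistedAntipodeAlgHomOp δ).unop_apply_unop_apply_eq_of_adjoin_eq_top hs h x

lemma twistedAntipode_apply_of_comul_eq (δ : H →ₐ[R] R) {h x₁ y₁ x₂ y₂ : H}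
    (hΔ : comul (R := R) h = x₁ ⊗ₜ y₁ + x₂ ⊗ₜ y₂) :
    twistedAntipode δ h = δ y₁ • antipode R x₁ + δ y₂ • antipode R x₂ := by
  simp [twistedAntipode, hΔ]

end HopfAlgebra

theorem statement9.{u} (k : Type u) [Field k] (q : k) (hq : q ≠ 0)
    (H : Type u) [Ring H] [HopfAlgebra k H]
    (ea eb ec ed : H)
    -- `H` is generated as an algebra by `a, b, c, d`
    (hgen : Algebra.adjoin k ({ea, eb, ec, ed} : Set H) = ⊤)
    -- the defining relations
    (hba : eb * ea = q • (ea * eb)) (hca : ec * ea = q • (ea * ec))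
    (hdb : ed * eb = q • (eb * ed)) (hdc : ed * ec = q • (ec * ed))
    (hbc : eb * ec = ec * eb)
    (had : ea * ed - q⁻¹ • (eb * ec) = 1) (hda : ed * ea - q • (eb * ec) = 1)
    -- `H` is the universal algebra with these generators and relations
    (hUMP : ∀ (B : Type u) [Ring B] [Algebra k B] (a' b' c' d' : B),
      b' * a' = q • (a' * b') → c' * a' = q • (a' * c') →
      d' * b' = q • (b' * d') → d' * c' = q • (c' * d') →
      b' * c' = c' * b' →
      a' * d' - q⁻¹ • (b' * c') = 1 → d' * a' - q • (b' * c') = 1 →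
      ∃ f : H →ₐ[k] B, f ea = a' ∧ f eb = b' ∧ f ec = c' ∧ f ed = d')
    -- comultiplication on the generators
    (hΔa : comul (R := k) ea = ea ⊗ₜ[k] ea + eb ⊗ₜ[k] ec)
    (hΔb : comul (R := k) eb = ea ⊗ₜ[k] eb + eb ⊗ₜ[k] ed)
    (hΔc : comul (R := k) ec = ec ⊗ₜ[k] ea + ed ⊗ₜ[k] ec)
    (hΔd : comul (R := k) ed = ec ⊗ₜ[k] eb + ed ⊗ₜ[k] ed)
    -- counit on the generators
    (hεa : counit (R := k) ea = 1) (hεd : counit (R := k) ed = 1)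
    (hεb : counit (R := k) eb = 0) (hεc : counit (R := k) ec = 0)
    -- antipode on the generators
    (hSa : HopfAlgebra.antipode (R := k) ea = ed)
    (hSd : HopfAlgebra.antipode (R := k) ed = ea)
    (hSb : HopfAlgebra.antipode (R := k) eb = -(q • eb))
    (hSc : HopfAlgebra.antipode (R := k) ec = -(q⁻¹ • ec)) :
    ∃ δ : H →ₐ[k] k, δ ea = q ∧ δ eb = 0 ∧ δ ec = 0 ∧ δ ed = q⁻¹ ∧
      ∀ h : H,
        ((TensorProduct.rid k H).toLinearMap
            ∘ₗ TensorProduct.map (HopfAlgebra.antipode (R := k)) δ.toLinearMap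
            ∘ₗ comul)
          (((TensorProduct.rid k H).toLinearMap
            ∘ₗ TensorProduct.map (HopfAlgebra.antipode (R := k)) δ.toLinearMap
            ∘ₗ comul) h) = h := by
  obtain ⟨δ, hδa, hδb, hδc, hδd⟩ := hUMP k q 0 0 q⁻¹
    (by simp) (by simp) (by simp) (by simp) (by simp)
    (by simp [mul_inv_cancel₀ hq]) (by simp [inv_mul_cancel₀ hq])
  refine ⟨δ, hδa, hδb, hδc, hδd, ?_⟩
  have hŜa : twistedAntipode δ ea = q • ed := by
    simp [twistedAntipode_apply_of_comul_eq δ hΔa, hSa, hδa, hδc]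
  have hŜb : twistedAntipode δ eb = -eb := by
    simp [twistedAntipode_apply_of_comul_eq δ hΔb, hSb, hδb, hδd, smul_smul, hq]
  have hŜc : twistedAntipode δ ec = -ec := by
    simp [twistedAntipode_apply_of_comul_eq δ hΔc, hSc, hδa, hδc, smul_smul, hq]
  have hŜd : twistedAntipode δ ed = q⁻¹ • ea := by
    simp [twistedAntipode_apply_of_comul_eq δ hΔd, hSd, hδb, hδd]
  refine twistedAntipode_involutive_of_adjoin_eq_top δ hgen ?_
  rintro x (rfl | rfl | rfl | rfl) <;>
    simp [hŜa, hŜb, hŜc, hŜd, smul_smul, hq]
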